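/- Let G : I([0,1])² → I([0,1]) and let F : I([0,1])^n → I([0,1]) be G-homogeneous. If there exists A ∈ I([0,1]) with F(A,...,A) = A such that the map G_A : I([0,1]) → I([0,1]), G_A(X) = G(X,A), is a bijection, then F is idempotent, i.e., F(X,...,X) = X for all X ∈ I([0,1]). -/

import Mathlib

open unitInterval

/-- Closed subintervals of [0,1], represented by endpoint pairs. -/
def Int01 := {p : I × I // p.1 ≤ p.2}

/-- Interval product. -/
def Pprod (X Y : Int01) : Int01 :=
  ⟨(X.1.1 * Y.1.1, X.1.2 * Y.1.2),
    mul_le_mul X.2 Y.2 Y.1.1.2.1 X.1.2.2.1⟩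

/-- Interval standard (Zadeh) negation. -/
def NS (X : Int01) : Int01 :=
  ⟨(σ X.1.2, σ X.1.1), symm_le_symm.mpr X.2⟩

theorem apply_const_eq_self_of_homogeneous {α ι : Type*} {G : α → α → α}
    {F : (ι → α) → α} (hhom : ∀ Λ X, F (fun i => G Λ (X i)) = G Λ (F X)) {A : α}
    (hA : F (fun _ => A) = A) (hsurj : Function.Surjective fun Λ => G Λ A) (X : α) :
    F (fun _ => X) = X := by
  obtain ⟨Λ, rfl⟩ := hsurj X
  calc F (fun _ => G Λ A) = G Λ (F fun _ => A) := hhom Λ _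
    _ = G Λ A := by rw [hA]

theorem stmt1 (n : ℕ) (G : Int01 → Int01 → Int01) (F : (Fin n → Int01) → Int01)
    (hhom : ∀ (Λ : Int01) (X : Fin n → Int01),
      F (fun i => G Λ (X i)) = G Λ (F X))
    (A : Int01) (hA : F (fun _ => A) = A)
    (hbij : Function.Bijective (fun X => G X A)) :
    ∀ X : Int01, F (fun _ => X) = X :=
  apply_const_eq_self_of_homogeneous hhom hA hbij.surjective
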